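/- In the setting of an exact sequence 0 → M' → M → M'' → 0 of quadratically normed free ℤ-modules (subspace norm on M', quotient norm on M''), one has χ(M) ≤ χ(M') + χ(M''). -/

import Mathlib

/-!
Write `K = ker g`. Then `E ≃ K ⊕ Kᗮ ≃ E' ⊕ E''` isometrically (`L²`-product), and under this
splitting `M ∩ (E' × 0) = M'` while `M''` is the projection of `M` to `E''`. A `ℤ`-basis of `M` made of
a basis of `M'` and lifts of a basis of `M''` has a block upper triangular coordinate matrix in a
product orthonormal basis, so `covol M = covol M' * covol M''`. The unit ball of the `L²`-product
lies in the product of the unit balls, so `vol B_E ≤ vol B_E' * vol B_E''`; take logarithms.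
-/

open MeasureTheory Module

/-- The volume of the unit ball in the Euclidean space `ℝ^r`. -/
noncomputable def unitBallVol (r : ℕ) : ℝ :=
  (volume (Metric.ball (0 : EuclideanSpace ℝ (Fin r)) 1)).toReal

open Metric WithLp

theorem Module.Basis.exists_sum_of_exact {R A B C ι κ : Type*} [CommRing R]
    [AddCommGroup A] [AddCommGroup B] [AddCommGroup C] [Module R A] [Module R B] [Module R C]
    {i : A →ₗ[R] B} {p : B →ₗ[R] C} (hi : Function.Injective i) (hp : Function.Surjective p)
    (hip : Function.Exact i p) (bA : Basis ι R A) (bC : Basis κ R C) :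
    ∃ b : Basis (ι ⊕ κ) R B, (∀ k, b (.inl k) = i (bA k)) ∧ ∀ k, p (b (.inr k)) = bC k := by
  let eA : A ≃ₗ[R] LinearMap.ker p :=
    (LinearEquiv.ofInjective i hi).trans (LinearEquiv.ofEq _ _ hip.linearMap_ker_eq.symm)
  let eC : (B ⧸ LinearMap.ker p) ≃ₗ[R] C := p.quotKerEquivOfSurjective hp
  refine ⟨(bA.map eA).sumQuot (bC.map eC.symm), fun k => ?_, fun k => ?_⟩
  · simp [eA]
  · rw [← p.quotKerEquivOfSurjective_apply_mk hp, Basis.sumQuot_inr]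
    simp [eC]

theorem ZLattice.covolume_eq_abs_det {ι F : Type*} [Fintype ι] [DecidableEq ι]
    [NormedAddCommGroup F] [InnerProductSpace ℝ F] [FiniteDimensional ℝ F]
    [MeasurableSpace F] [BorelSpace F]
    (L : Submodule ℤ F) [DiscreteTopology L] [IsZLattice ℝ L]
    (b : Basis ι ℤ L) (b₀ : OrthonormalBasis ι ℝ F) :
    ZLattice.covolume L = |b₀.toBasis.det ((↑) ∘ b)| := by
  rw [ZLattice.covolume_eq_det_mul_measureReal L volume b b₀.toBasis, measureReal_def,
    measure_congr (ZSpan.fundamentalDomain_ae_parallelepiped _ volume), b₀.coe_toBasis,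
    b₀.volume_parallelepiped, ENNReal.toReal_one, mul_one]

theorem Submodule.exists_basis_withLp_prod {U V ι κ : Type*} [AddCommGroup U] [AddCommGroup V]
    {L : Submodule ℤ (WithLp 2 (U × V))} {M' : Submodule ℤ U} {M'' : Submodule ℤ V}
    (h' : ∀ x, toLp 2 (x, 0) ∈ L ↔ x ∈ M') (h'' : L.map (sndₗ 2 ℤ U V) = M'')
    (β' : Basis ι ℤ M') (β'' : Basis κ ℤ M'') :
    ∃ B : Basis (ι ⊕ κ) ℤ L, (∀ k, (B (.inl k) : WithLp 2 (U × V)) = toLp 2 ((β' k : U), 0)) ∧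
      ∀ k, (B (.inr k) : WithLp 2 (U × V)).snd = β'' k := by
  let i : M' →ₗ[ℤ] L :=
    { toFun x := ⟨toLp 2 (x, 0), (h' x).2 x.2⟩
      map_add' x y := Subtype.ext <|
        show toLp 2 ((x + y : U), (0 : V)) = toLp 2 ((x : U), 0) + toLp 2 ((y : U), 0) by
          rw [← toLp_add, Prod.mk_add_mk, add_zero]
      map_smul' c x := Subtype.ext <|
        show toLp 2 ((c • x : U), (0 : V)) = c • toLp 2 ((x : U), 0) by
          rw [← toLp_smul, Prod.smul_mk, smul_zero] }
  let p : L →ₗ[ℤ] M'' := (sndₗ 2 ℤ U V).restrict fun v hv => h'' ▸ Submodule.mem_map_of_mem hv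
  have hi : Function.Injective i := fun x y hxy => by
    simpa [i] using congrArg (fun v : L => (v : WithLp 2 (U × V)).fst) hxy
  have hp : Function.Surjective p := by
    rintro ⟨y, hy⟩
    obtain ⟨v, hv, rfl⟩ := h''.symm ▸ hy
    exact ⟨⟨v, hv⟩, rfl⟩
  have hip : Function.Exact i p := by
    rintro ⟨v, hv⟩
    constructor
    · intro h
      have h0 : v.snd = 0 := congrArg Subtype.val h
      have hv' : toLp 2 (v.fst, 0) = v := by rw [← h0]; rfl
      exact ⟨⟨v.fst, (h' _).1 (hv' ▸ hv)⟩, Subtype.ext hv'⟩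
    · rintro ⟨x, hx⟩
      rw [← hx]
      rfl
  obtain ⟨B, hB', hB''⟩ := Basis.exists_sum_of_exact hi hp hip β' β''
  exact ⟨B, fun k => congrArg Subtype.val (hB' k), fun k => congrArg Subtype.val (hB'' k)⟩

section Prod

variable {U V : Type*}
  [NormedAddCommGroup U] [InnerProductSpace ℝ U] [FiniteDimensional ℝ U]
  [MeasurableSpace U] [BorelSpace U]
  [NormedAddCommGroup V] [InnerProductSpace ℝ V] [FiniteDimensional ℝ V]
  [MeasurableSpace V] [BorelSpace V]

theorem volume_ball_withLp_prod_le (r : ℝ) :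
    volume (ball (0 : WithLp 2 (U × V)) r) ≤ volume (ball (0 : U) r) * volume (ball (0 : V) r) :=
  calc volume (ball (0 : WithLp 2 (U × V)) r)
      ≤ volume (ofLp ⁻¹' (ball (0 : U) r ×ˢ ball (0 : V) r)) := by
        refine measure_mono fun x hx => ?_
        rw [mem_ball_zero_iff] at hx
        exact ⟨mem_ball_zero_iff.2 ((WithLp.norm_fst_le _ x).trans_lt hx),
          mem_ball_zero_iff.2 ((WithLp.norm_snd_le _ x).trans_lt hx)⟩
    _ = volume (ball (0 : U) r) * volume (ball (0 : V) r) := by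
        rw [(volume_preserving_ofLp U V).measure_preimage
          (measurableSet_ball.prod measurableSet_ball).nullMeasurableSet, Measure.volume_eq_prod,
          Measure.prod_prod]

theorem ZLattice.covolume_withLp_prod
    (L : Submodule ℤ (WithLp 2 (U × V))) [DiscreteTopology L] [IsZLattice ℝ L]
    (M' : Submodule ℤ U) [DiscreteTopology M'] [IsZLattice ℝ M']
    (M'' : Submodule ℤ V) [DiscreteTopology M''] [IsZLattice ℝ M'']
    (h' : ∀ x, toLp 2 (x, 0) ∈ L ↔ x ∈ M') (h'' : L.map (sndₗ 2 ℤ U V) = M'') :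
    covolume L = covolume M' * covolume M'' := by
  classical
  let β' := Free.chooseBasis ℤ M'
  let β'' := Free.chooseBasis ℤ M''
  obtain ⟨B, hB', hB''⟩ := Submodule.exists_basis_withLp_prod h' h'' β' β''
  let b' := (stdOrthonormalBasis ℝ U).reindex
    ((stdOrthonormalBasis ℝ U).toBasis.indexEquiv (β'.ofZLatticeBasis ℝ M'))
  let b'' := (stdOrthonormalBasis ℝ V).reindex
    ((stdOrthonormalBasis ℝ V).toBasis.indexEquiv (β''.ofZLatticeBasis ℝ M''))
  rw [covolume_eq_abs_det L B (b'.prod b''), covolume_eq_abs_det M' β' b',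
    covolume_eq_abs_det M'' β'' b'', Basis.det_apply, Basis.det_apply, Basis.det_apply]
  set A := (b'.prod b'').toBasis.toMatrix ((↑) ∘ B)
  have hA : A = Matrix.fromBlocks (b'.toBasis.toMatrix ((↑) ∘ β')) A.toBlocks₁₂ 0
      (b''.toBasis.toMatrix ((↑) ∘ β'')) := by
    refine Matrix.ext_iff_blocks.2 ⟨?_, rfl, ?_, ?_⟩
    · ext k l
      simp [A, Matrix.toBlocks₁₁, Basis.toMatrix_apply, OrthonormalBasis.repr_apply_apply, hB']
    · ext k l
      simp [A, Matrix.toBlocks₂₁, Basis.toMatrix_apply, OrthonormalBasis.repr_apply_apply, hB']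
    · ext k l
      simp [A, Matrix.toBlocks₂₂, Basis.toMatrix_apply, OrthonormalBasis.repr_apply_apply, hB'']
  rw [hA, Matrix.det_fromBlocks_zero₂₁, abs_mul]

end Prod

theorem volume_ball_toReal_pos {E : Type*} [NormedAddCommGroup E] [InnerProductSpace ℝ E]
    [FiniteDimensional ℝ E] [MeasurableSpace E] [BorelSpace E] {r : ℝ} (hr : 0 < r) :
    0 < (volume (ball (0 : E) r)).toReal :=
  ENNReal.toReal_pos (measure_ball_pos volume 0 hr).ne' measure_ball_lt_top.ne

theorem exists_linearIsometryEquiv_withLp_prod {E' E E'' : Type*}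
    [NormedAddCommGroup E'] [InnerProductSpace ℝ E']
    [NormedAddCommGroup E] [InnerProductSpace ℝ E] [FiniteDimensional ℝ E]
    [NormedAddCommGroup E''] [InnerProductSpace ℝ E'']
    (f : E' →ₗᵢ[ℝ] E) (g : E →ₗ[ℝ] E'') (hsurj : Function.Surjective g)
    (hexact : LinearMap.ker g = LinearMap.range f.toLinearMap)
    (hquot : ∀ x ∈ (LinearMap.ker g)ᗮ, ‖g x‖ = ‖x‖) :
    ∃ Ψ : E ≃ₗᵢ[ℝ] WithLp 2 (E' × E''),
      (∀ x, Ψ (f x) = toLp 2 (x, 0)) ∧ ∀ y, (Ψ y).snd = g y := by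
  set K := LinearMap.ker g
  have hg_proj (y : E) : g (Kᗮ.orthogonalProjectionOnto y) = g y := by
    rw [K.orthogonalProjectionOnto_orthogonal, Submodule.coe_mk, map_sub,
      K.starProjection_apply, LinearMap.mem_ker.1 (K.orthogonalProjectionOnto y).2, sub_zero]
  let gK : Kᗮ →ₗᵢ[ℝ] E'' := ⟨g ∘ₗ Kᗮ.subtype, fun x => hquot x x.2⟩
  have hgK : Function.Surjective gK := fun z => by
    obtain ⟨y, rfl⟩ := hsurj z
    exact ⟨Kᗮ.orthogonalProjectionOnto y, hg_proj y⟩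
  let eK : E' ≃ₗᵢ[ℝ] K := f.equivRange.trans (LinearIsometryEquiv.ofEq _ _ hexact.symm)
  refine ⟨K.orthogonalDecomposition.trans
    (LinearIsometryEquiv.withLpProdCongr 2 eK.symm (LinearIsometryEquiv.ofSurjective gK hgK)),
    fun x => ?_, fun y => by
      rw [LinearIsometryEquiv.trans_apply, K.orthogonalDecomposition_apply]; exact hg_proj y⟩
  have hfx : f x ∈ K := hexact ▸ LinearMap.mem_range_self _ x
  have heK : eK x = ⟨f x, hfx⟩ := rfl
  simp [K.orthogonalProjectionOnto_mem_subspace_eq_self ⟨f x, hfx⟩,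
    K.orthogonalProjectionOnto_orthogonal_apply_eq_zero hfx, ← heK]

theorem ZLattice.covolume_eq_mul_covolume_of_splitting {E' E E'' : Type*}
    [NormedAddCommGroup E'] [InnerProductSpace ℝ E'] [FiniteDimensional ℝ E']
    [MeasurableSpace E'] [BorelSpace E']
    [NormedAddCommGroup E] [InnerProductSpace ℝ E] [FiniteDimensional ℝ E]
    [MeasurableSpace E] [BorelSpace E]
    [NormedAddCommGroup E''] [InnerProductSpace ℝ E''] [FiniteDimensional ℝ E'']
    [MeasurableSpace E''] [BorelSpace E'']
    {f : E' →ₗᵢ[ℝ] E} {g : E →ₗ[ℝ] E''} {Ψ : E ≃ₗᵢ[ℝ] WithLp 2 (E' × E'')}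
    (hΨf : ∀ x, Ψ (f x) = toLp 2 (x, 0)) (hΨg : ∀ y, (Ψ y).snd = g y)
    (M' : Submodule ℤ E') [DiscreteTopology M'] [IsZLattice ℝ M']
    (M : Submodule ℤ E) [DiscreteTopology M] [IsZLattice ℝ M]
    (M'' : Submodule ℤ E'') [DiscreteTopology M''] [IsZLattice ℝ M'']
    (hM' : ∀ x, f x ∈ M ↔ x ∈ M') (hM'' : M.map (g.restrictScalars ℤ) = M'') :
    covolume M = covolume M' * covolume M'' := by
  rw [← ZLattice.covolume_comap M volume volume (e := Ψ.symm.toContinuousLinearEquiv)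
    Ψ.symm.measurePreserving]
  refine covolume_withLp_prod _ M' M'' (fun x => ?_) ?_
  · rw [← hM' x, ← Ψ.symm_apply_eq.2 (hΨf x).symm]
    rfl
  · rw [← hM'']
    ext y
    constructor
    · rintro ⟨v, hv, rfl⟩
      exact ⟨Ψ.symm v, hv, by simp [← hΨg]⟩
    · rintro ⟨x, hx, rfl⟩
      exact ⟨Ψ x, by simpa using hx, hΨg x⟩

/-- Subadditivity of the arithmetic volume `χ` in an exact sequence
`0 → M' → M → M'' → 0` of quadratically normed lattices, where `M'` carries the subspace
inner product (encoded by the isometric embedding `f`) and `M''` the quotient inner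
product (encoded by the surjection `g` isometric on the orthogonal complement of its
kernel): `χ(M) ≤ χ(M') + χ(M'')`. -/
theorem chi_le_chi_add_chi
    {E' E E'' : Type*}
    [NormedAddCommGroup E'] [InnerProductSpace ℝ E'] [FiniteDimensional ℝ E']
    [MeasurableSpace E'] [BorelSpace E']
    [NormedAddCommGroup E] [InnerProductSpace ℝ E] [FiniteDimensional ℝ E]
    [MeasurableSpace E] [BorelSpace E]
    [NormedAddCommGroup E''] [InnerProductSpace ℝ E''] [FiniteDimensional ℝ E'']
    [MeasurableSpace E''] [BorelSpace E'']
    (f : E' →ₗᵢ[ℝ] E) (g : E →ₗ[ℝ] E'')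
    (hsurj : Function.Surjective g)
    (hexact : LinearMap.ker g = LinearMap.range f.toLinearMap)
    (hquot : ∀ x ∈ (LinearMap.ker g)ᗮ, ‖g x‖ = ‖x‖)
    (M' : Submodule ℤ E') [DiscreteTopology M'] [IsZLattice ℝ M']
    (M : Submodule ℤ E) [DiscreteTopology M] [IsZLattice ℝ M]
    (M'' : Submodule ℤ E'') [DiscreteTopology M''] [IsZLattice ℝ M'']
    (hM' : M'.map (f.toLinearMap.restrictScalars ℤ) =
      M ⊓ (LinearMap.ker g).restrictScalars ℤ)
    (hM'' : M.map (g.restrictScalars ℤ) = M'') :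
    Real.log ((volume (Metric.ball (0 : E) 1)).toReal / ZLattice.covolume M)
      ≤ Real.log ((volume (Metric.ball (0 : E') 1)).toReal / ZLattice.covolume M')
        + Real.log ((volume (Metric.ball (0 : E'') 1)).toReal / ZLattice.covolume M'') := by
  obtain ⟨Ψ, hΨf, hΨg⟩ := exists_linearIsometryEquiv_withLp_prod f g hsurj hexact hquot
  have hfM (x : E') : f x ∈ M ↔ x ∈ M' := by
    have hker : f x ∈ LinearMap.ker g := hexact ▸ LinearMap.mem_range_self _ x
    refine ⟨fun hx => ?_, fun hx => (hM' ▸ Submodule.mem_map_of_mem hx).1⟩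
    obtain ⟨y, hy, hyx⟩ : f x ∈ M'.map (f.toLinearMap.restrictScalars ℤ) := hM' ▸ ⟨hx, hker⟩
    exact f.injective hyx ▸ hy
  have hcov := ZLattice.covolume_eq_mul_covolume_of_splitting hΨf hΨg M' M M'' hfM hM''
  have hball : volume (ball (0 : E) 1) = volume (ball (0 : WithLp 2 (E' × E'')) 1) := by
    rw [← Ψ.measurePreserving.measure_preimage measurableSet_ball.nullMeasurableSet,
      Ψ.preimage_ball, map_zero]
  have hvol : (volume (ball (0 : E) 1)).toReal
      ≤ (volume (ball (0 : E') 1)).toReal * (volume (ball (0 : E'') 1)).toReal := by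
    rw [← ENNReal.toReal_mul, hball]
    exact ENNReal.toReal_mono (ENNReal.mul_ne_top measure_ball_lt_top.ne
      measure_ball_lt_top.ne) (volume_ball_withLp_prod_le 1)
  have hv := volume_ball_toReal_pos (E := E) one_pos
  have hv' := volume_ball_toReal_pos (E := E') one_pos
  have hv'' := volume_ball_toReal_pos (E := E'') one_pos
  have hc' := ZLattice.covolume_pos M' volume
  have hc'' := ZLattice.covolume_pos M'' volume
  rw [hcov, ← Real.log_mul (by positivity) (by positivity), div_mul_div_comm]
  exact Real.log_le_log (by positivity) (div_le_div_of_nonneg_right hvol (by positivity))
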